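/- arXiv:2201.10560 — 8 statements merged into one kernel-verified Lean document; each statement's English description precedes it below -/
import Mathlib

section
/- Let c = (c₁,c₂) ∈ ℂ², let I = (α₁,α₂) and J = (β₁,β₂) be pairs of nonnegative integers, let a, b ∈ ℂ be not both zero, and let m₁, m₂, n₁, n₂ be positive integers with m₁m₂ > n₁n₂. Then there is no pair (f₁,f₂) of transcendental entire functions of finite order on ℂ² satisfying, for all z ∈ ℂ², (a·∂^I f₁(z) + b·∂^J f₁(z))^{n₁} + f₂(z+c)^{m₁} = 1 and (a·∂^I f₂(z) + b·∂^J f₂(z))^{n₂} + f₁(z+c)^{m₂} = 1. -/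
/-- A function on ℂ² is entire if it is holomorphic everywhere. -/
def Entire2 (f : ℂ × ℂ → ℂ) : Prop := Differentiable ℂ f

/-- A function on ℂ² is transcendental if it is not a polynomial function. -/
def Transcendental2 (f : ℂ × ℂ → ℂ) : Prop :=
  ¬ ∃ p : MvPolynomial (Fin 2) ℂ, ∀ z : ℂ × ℂ, f z = MvPolynomial.eval ![z.1, z.2] p

/-- A function on ℂ² is of finite order if |f(z)| ≤ exp(‖z‖^ρ) for all large ‖z‖. -/
def FiniteOrder2 (f : ℂ × ℂ → ℂ) : Prop :=
  ∃ ρ > (0 : ℝ), ∃ R > (0 : ℝ), ∀ z : ℂ × ℂ, R ≤ ‖z‖ → ‖f z‖ ≤ Real.exp (‖z‖ ^ ρ)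

/-- Partial derivative with respect to the first variable. -/
noncomputable def pd1 (f : ℂ × ℂ → ℂ) : ℂ × ℂ → ℂ := fun z => fderiv ℂ f z (1, 0)

/-- Partial derivative with respect to the second variable. -/
noncomputable def pd2 (f : ℂ × ℂ → ℂ) : ℂ × ℂ → ℂ := fun z => fderiv ℂ f z (0, 1)

/-- Iterated partial derivative `∂^{α₁+α₂} f / ∂z₁^{α₁} ∂z₂^{α₂}`. -/
noncomputable def partialI (α₁ α₂ : ℕ) (f : ℂ × ℂ → ℂ) : ℂ × ℂ → ℂ :=
  pd1^[α₁] (pd2^[α₂] f)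

/-!
Write `T(f, r) = log⁺ M(f, r)`, where `M(f, r)` is the maximum modulus of `f` on the ball of
radius `r`. Cauchy's estimate bounds a partial derivative on a ball by `f` on the ball of radius one
larger, so the two equations give `m₁ T(f₂, r) ≤ n₁ T(f₁, r + s) + O(1)` and
`m₂ T(f₁, r) ≤ n₂ T(f₂, r + s) + O(1)`. Hence `T(f₂, r) ≤ θ T(f₂, r + 2s) + O(1)` with
`θ = n₁n₂ / (m₁m₂) < 1`. Iterating this `k` times and letting `k → ∞`, the polynomial bound on
`T(f₂, ·)` coming from finite order is killed by `θ ^ k`, so `T(f₂, ·)` is bounded: `f₂` is a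
bounded entire function, hence constant by Liouville's theorem.
-/

open Metric Real Set Filter Topology
open scoped Interval

section Holomorphic

open Complex

variable {E F : Type*} [NormedAddCommGroup E] [NormedSpace ℂ E]
  [NormedAddCommGroup F] [NormedSpace ℂ F] {f : E → F}

theorem hasDerivAt_apply_add_smul (hf : Differentiable ℂ f) (z v : E) :
    HasDerivAt (fun t : ℂ => f (z + t • v)) (fderiv ℂ f z v) 0 := by
  have := (hf (z + (0 : ℂ) • v)).hasFDerivAt.comp_hasDerivAt (0 : ℂ)
    (((hasDerivAt_id (0 : ℂ)).smul_const v).const_add z)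
  simpa [Function.comp_def] using this

theorem norm_fderiv_le_of_forall_mem_closedBall_norm_le (hf : Differentiable ℂ f)
    {z : E} {R C : ℝ} (hR : 0 < R) (hC : ∀ w ∈ closedBall z R, ‖f w‖ ≤ C) :
    ‖fderiv ℂ f z‖ ≤ C / R := by
  have hC₀ : 0 ≤ C := (norm_nonneg _).trans (hC z (mem_closedBall_self hR.le))
  refine ContinuousLinearMap.opNorm_le_bound _ (by positivity) fun v => ?_
  rcases eq_or_ne v 0 with rfl | hv
  · simp
  have hv' : 0 < ‖v‖ := norm_pos_iff.2 hv
  have hline := hasDerivAt_apply_add_smul hf z v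
  have hdiff : Differentiable ℂ (fun t : ℂ => f (z + t • v)) :=
    hf.comp ((differentiable_id.smul_const v).const_add z)
  calc ‖fderiv ℂ f z v‖ = ‖deriv (fun t : ℂ => f (z + t • v)) 0‖ := by rw [hline.deriv]
    _ ≤ C / (R / ‖v‖) := by
        refine norm_deriv_le_of_forall_mem_sphere_norm_le (by positivity) hdiff.diffContOnCl
          fun t ht => hC _ ?_
        rw [mem_sphere_zero_iff_norm] at ht
        rw [mem_closedBall, dist_self_add_left, norm_smul, ht, div_mul_cancel₀ _ hv'.ne']
    _ = C / R * ‖v‖ := by field_simp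

theorem fderiv_apply_eq_circleIntegral [CompleteSpace F] (hf : Differentiable ℂ f)
    (z v : E) :
    fderiv ℂ f z v = (2 * π * I : ℂ)⁻¹ • ∮ t in C(0, 1), (t ^ 2)⁻¹ • f (z + t • v) := by
  have hline := hasDerivAt_apply_add_smul hf z v
  have hdiff : Differentiable ℂ (fun t : ℂ => f (z + t • v)) :=
    hf.comp ((differentiable_id.smul_const v).const_add z)
  rw [← hline.deriv, ← two_pi_I_inv_smul_circleIntegral_sub_sq_inv_smul_of_differentiable
    isOpen_univ (subset_univ _) hdiff.differentiableOn (mem_ball_self one_pos)]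
  simp only [sub_zero]

variable [FiniteDimensional ℂ E] [CompleteSpace F] [SecondCountableTopology F]

theorem differentiable_intervalIntegral_smul_comp_add (hf : Differentiable ℂ f)
    {κ : ℝ → ℂ} {γ : ℝ → E} (hκ : Continuous κ) (hγ : Continuous γ) (a b : ℝ) :
    Differentiable ℂ (fun z => ∫ θ in a..b, κ θ • f (z + γ θ)) := by
  borelize E
  intro z₀
  obtain ⟨Cκ, hCκ⟩ := isCompact_uIcc.exists_bound_of_continuousOn (s := [[a, b]]) hκ.continuousOn
  obtain ⟨Cγ, hCγ⟩ := isCompact_uIcc.exists_bound_of_continuousOn (s := [[a, b]]) hγ.continuousOn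
  obtain ⟨M, hM⟩ := (isCompact_closedBall z₀ (Cγ + 2)).exists_bound_of_continuousOn
    hf.continuous.continuousOn
  have hF' : ∀ θ ∈ Ι a b, ∀ x ∈ ball z₀ 1, ‖κ θ • fderiv ℂ f (x + γ θ)‖ ≤ Cκ * M := by
    intro θ hθ x hx
    have hθ' := uIoc_subset_uIcc hθ
    rw [norm_smul]
    refine mul_le_mul (hCκ θ hθ') ?_ (norm_nonneg _) ((norm_nonneg _).trans (hCκ θ hθ'))
    rw [← div_one M]
    refine norm_fderiv_le_of_forall_mem_closedBall_norm_le hf one_pos fun w hw => hM w ?_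
    rw [mem_closedBall] at hw ⊢
    rw [mem_ball] at hx
    calc dist w z₀ ≤ dist w (x + γ θ) + dist (x + γ θ) x + dist x z₀ := dist_triangle4 _ _ _ _
      _ ≤ 1 + Cγ + 1 := by
          gcongr
          simpa [dist_eq_norm] using hCγ θ hθ'
      _ = Cγ + 2 := by ring
  refine (intervalIntegral.hasFDerivAt_integral_of_dominated_of_fderiv_le (𝕜 := ℂ)
    (F' := fun x θ => κ θ • fderiv ℂ f (x + γ θ)) (bound := fun _ => Cκ * M)
    (ball_mem_nhds z₀ one_pos) ?_ ?_ ?_ ?_ intervalIntegrable_const ?_).differentiableAt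
  · exact Eventually.of_forall fun x =>
      (hκ.smul (hf.continuous.comp (continuous_const.add hγ))).aestronglyMeasurable
  · exact (hκ.smul (hf.continuous.comp (continuous_const.add hγ))).intervalIntegrable _ _
  · exact (hκ.measurable.smul ((measurable_fderiv ℂ f).comp
      (measurable_const.add hγ.measurable))).aestronglyMeasurable
  · exact MeasureTheory.ae_of_all _ hF'
  · exact MeasureTheory.ae_of_all _ fun θ _ x _ =>
      ((hf _).hasFDerivAt.comp x ((hasFDerivAt_id x).add_const (γ θ))).const_smul (κ θ)

/-- Centring the Cauchy circle of the complex line `t ↦ z + t • v` at `z` itself makes the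
integrand depend on `z` only through `f (z + t • v)`, so holomorphy of `f` in all variables
passes to its directional derivatives. -/
theorem differentiable_fderiv_apply (hf : Differentiable ℂ f) (v : E) :
    Differentiable ℂ (fun z => fderiv ℂ f z v) := by
  have hκ : Continuous fun θ : ℝ =>
      (2 * π * I : ℂ)⁻¹ * (deriv (circleMap 0 1) θ * (circleMap 0 1 θ ^ 2)⁻¹) := by
    simp only [deriv_circleMap]
    exact continuous_const.mul (((continuous_circleMap 0 1).mul continuous_const).mul
      (((continuous_circleMap 0 1).pow 2).inv₀ fun _ =>
        pow_ne_zero 2 (circleMap_ne_center one_ne_zero)))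
  convert differentiable_intervalIntegral_smul_comp_add hf hκ
    (γ := fun θ => circleMap 0 1 θ • v) ((continuous_circleMap 0 1).smul continuous_const)
    0 (2 * π) using 2 with z
  rw [fderiv_apply_eq_circleIntegral hf, circleIntegral, ← intervalIntegral.integral_smul]
  simp only [smul_smul]

end Holomorphic

section MaxModulus

variable {E F : Type*} [NormedAddCommGroup E] [NormedAddCommGroup F] {f : E → F}

noncomputable def maxModulus (f : E → F) (r : ℝ) : ℝ :=
  sSup ((fun z => ‖f z‖) '' closedBall 0 r)

theorem maxModulus_nonneg (f : E → F) (r : ℝ) : 0 ≤ maxModulus f r :=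
  Real.sSup_nonneg (by rintro _ ⟨z, -, rfl⟩; exact norm_nonneg _)

theorem maxModulus_le {r C : ℝ} (hC : 0 ≤ C) (h : ∀ z, ‖z‖ ≤ r → ‖f z‖ ≤ C) :
    maxModulus f r ≤ C :=
  Real.sSup_le (by rintro _ ⟨z, hz, rfl⟩; exact h z (mem_closedBall_zero_iff.1 hz)) hC

theorem norm_le_maxModulus [ProperSpace E] (hf : Continuous f) {z : E} {r : ℝ} (hz : ‖z‖ ≤ r) :
    ‖f z‖ ≤ maxModulus f r :=
  le_csSup ((isCompact_closedBall 0 r).image hf.norm).bddAbove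
    ⟨z, mem_closedBall_zero_iff.2 hz, rfl⟩

theorem maxModulus_mono [ProperSpace E] (hf : Continuous f) : Monotone (maxModulus f) :=
  fun _ r' h =>
    maxModulus_le (maxModulus_nonneg f r') fun _ hz => norm_le_maxModulus hf (hz.trans h)

theorem maxModulus_of_neg {r : ℝ} (hr : r < 0) : maxModulus f r = 0 := by
  simp [maxModulus, closedBall_eq_empty.2 hr]

theorem exists_norm_eq_maxModulus [ProperSpace E] (hf : Continuous f) {r : ℝ} (hr : 0 ≤ r) :
    ∃ z, ‖z‖ ≤ r ∧ ‖f z‖ = maxModulus f r := by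
  obtain ⟨z, hz, hzr⟩ := ((isCompact_closedBall (0 : E) r).image hf.norm).sSup_mem
    ((nonempty_closedBall.2 hr).image _)
  exact ⟨z, mem_closedBall_zero_iff.1 hz, hzr⟩

end MaxModulus

section DerivativeBounds

variable {E F : Type*} [NormedAddCommGroup E] [NormedSpace ℂ E] [FiniteDimensional ℂ E]
  [NormedAddCommGroup F] [NormedSpace ℂ F] {f : E → F} {v : E}

theorem maxModulus_fderiv_apply_le (hf : Differentiable ℂ f) (hv : ‖v‖ ≤ 1) (r : ℝ) :
    maxModulus (fun z => fderiv ℂ f z v) r ≤ maxModulus f (r + 1) := by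
  refine maxModulus_le (maxModulus_nonneg _ _) fun z hz => ?_
  calc ‖fderiv ℂ f z v‖ ≤ ‖fderiv ℂ f z‖ * ‖v‖ := (fderiv ℂ f z).le_opNorm v
    _ ≤ ‖fderiv ℂ f z‖ := mul_le_of_le_one_right (norm_nonneg _) hv
    _ ≤ maxModulus f (r + 1) / 1 := by
        refine norm_fderiv_le_of_forall_mem_closedBall_norm_le hf one_pos fun w hw =>
          norm_le_maxModulus hf.continuous ?_
        calc ‖w‖ ≤ ‖z‖ + dist w z := by
              simpa [dist_eq_norm] using norm_le_norm_add_norm_sub' w z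
          _ ≤ r + 1 := add_le_add hz (mem_closedBall.1 hw)
    _ = maxModulus f (r + 1) := div_one _

variable [CompleteSpace F] [SecondCountableTopology F]

theorem differentiable_iterate_fderiv_apply (hf : Differentiable ℂ f) (v : E) (n : ℕ) :
    Differentiable ℂ ((fun g z => fderiv ℂ g z v)^[n] f) :=
  Set.MapsTo.iterate (s := {g : E → F | Differentiable ℂ g})
    (fun _ hg => differentiable_fderiv_apply hg v) n hf

theorem maxModulus_iterate_fderiv_apply_le (hf : Differentiable ℂ f) (hv : ‖v‖ ≤ 1) (n : ℕ)
    (r : ℝ) : maxModulus ((fun g z => fderiv ℂ g z v)^[n] f) r ≤ maxModulus f (r + n) := by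
  induction n generalizing f with
  | zero => simp
  | succ n ih =>
    rw [Function.iterate_succ_apply]
    calc _ ≤ maxModulus (fun z => fderiv ℂ f z v) (r + n) := ih (differentiable_fderiv_apply hf v)
      _ ≤ maxModulus f (r + n + 1) := maxModulus_fderiv_apply_le hf hv _
      _ = maxModulus f (r + (n + 1 : ℕ)) := by push_cast; ring_nf

end DerivativeBounds

theorem norm_partialI_le_maxModulus {f : ℂ × ℂ → ℂ} (hf : Differentiable ℂ f) {i j : ℕ}
    {z : ℂ × ℂ} {r : ℝ} (hr : ‖z‖ + i + j ≤ r) : ‖partialI i j f z‖ ≤ maxModulus f r := by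
  have hj := differentiable_iterate_fderiv_apply hf ((0, 1) : ℂ × ℂ) j
  calc ‖partialI i j f z‖ ≤ maxModulus (pd1^[i] (pd2^[j] f)) ‖z‖ :=
        norm_le_maxModulus (differentiable_iterate_fderiv_apply hj ((1, 0) : ℂ × ℂ) i).continuous
          le_rfl
    _ ≤ maxModulus (pd2^[j] f) (‖z‖ + i) := maxModulus_iterate_fderiv_apply_le hj (by simp) i _
    _ ≤ maxModulus f (‖z‖ + i + j) := maxModulus_iterate_fderiv_apply_le hf (by simp) j _
    _ ≤ maxModulus f r := maxModulus_mono hf.continuous hr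

theorem norm_pow_le_of_add_pow_eq_one {f p : ℂ × ℂ → ℂ} (hf : Differentiable ℂ f)
    {a b : ℂ} {i₁ i₂ j₁ j₂ m n : ℕ} {c w : ℂ × ℂ} {r s : ℝ} (hsi : ‖c‖ + i₁ + i₂ ≤ s)
    (hsj : ‖c‖ + j₁ + j₂ ≤ s)
    (heq : ∀ z, (a * partialI i₁ i₂ f z + b * partialI j₁ j₂ f z) ^ n + p (z + c) ^ m = 1)
    (hw : ‖w‖ ≤ r) : ‖p w‖ ^ m ≤ 1 + ((‖a‖ + ‖b‖) * maxModulus f (r + s)) ^ n := by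
  set L := a * partialI i₁ i₂ f (w - c) + b * partialI j₁ j₂ f (w - c)
  have hwc : ‖w - c‖ ≤ r + ‖c‖ := (norm_sub_le _ _).trans (by linarith)
  have hL : ‖L‖ ≤ (‖a‖ + ‖b‖) * maxModulus f (r + s) :=
    calc ‖L‖ ≤ ‖a‖ * ‖partialI i₁ i₂ f (w - c)‖ + ‖b‖ * ‖partialI j₁ j₂ f (w - c)‖ :=
          (norm_add_le _ _).trans (by rw [norm_mul, norm_mul])
      _ ≤ ‖a‖ * maxModulus f (r + s) + ‖b‖ * maxModulus f (r + s) := by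
          gcongr <;> exact norm_partialI_le_maxModulus hf (by linarith)
      _ = (‖a‖ + ‖b‖) * maxModulus f (r + s) := by ring
  have hpw : p w ^ m = 1 - L ^ n := by
    have := heq (w - c)
    rw [sub_add_cancel] at this
    exact eq_sub_of_add_eq' this
  calc ‖p w‖ ^ m = ‖1 - L ^ n‖ := by rw [← norm_pow, hpw]
    _ ≤ 1 + ‖L‖ ^ n := (norm_sub_le _ _).trans (by rw [norm_one, norm_pow])
    _ ≤ 1 + ((‖a‖ + ‖b‖) * maxModulus f (r + s)) ^ n := by gcongr

theorem mul_posLog_maxModulus_le {f p : ℂ × ℂ → ℂ} (hf : Differentiable ℂ f) (hp : Continuous p)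
    {a b : ℂ} {i₁ i₂ j₁ j₂ m n : ℕ} {c : ℂ × ℂ} {s : ℝ} (hsi : ‖c‖ + i₁ + i₂ ≤ s)
    (hsj : ‖c‖ + j₁ + j₂ ≤ s)
    (heq : ∀ z, (a * partialI i₁ i₂ f z + b * partialI j₁ j₂ f z) ^ n + p (z + c) ^ m = 1)
    (r : ℝ) :
    m * log⁺ (maxModulus p r) ≤
      n * log⁺ (maxModulus f (r + s)) + (log 2 + n * log⁺ (‖a‖ + ‖b‖)) := by
  set X := maxModulus f (r + s)
  rcases lt_or_ge r 0 with hr | hr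
  · rw [maxModulus_of_neg hr, posLog_zero, mul_zero]
    have := posLog_nonneg (x := X)
    have := posLog_nonneg (x := ‖a‖ + ‖b‖)
    have := log_nonneg one_le_two
    positivity
  obtain ⟨w, hw, hpw⟩ := exists_norm_eq_maxModulus hp hr
  calc m * log⁺ (maxModulus p r) = log⁺ (‖p w‖ ^ m) := by rw [← hpw, posLog_pow]
    _ ≤ log⁺ (1 + ((‖a‖ + ‖b‖) * X) ^ n) :=
        posLog_le_posLog (by positivity) (norm_pow_le_of_add_pow_eq_one hf hsi hsj heq hw)
    _ ≤ log 2 + log⁺ 1 + log⁺ (((‖a‖ + ‖b‖) * X) ^ n) := posLog_add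
    _ ≤ log 2 + n * (log⁺ (‖a‖ + ‖b‖) + log⁺ X) := by
        rw [posLog_one, posLog_pow, add_zero]
        gcongr
        exact posLog_mul
    _ = n * log⁺ X + (log 2 + n * log⁺ (‖a‖ + ‖b‖)) := by ring

theorem FiniteOrder2.exists_posLog_maxModulus_le {f : ℂ × ℂ → ℂ} (h : FiniteOrder2 f)
    (hf : Continuous f) : ∃ (N : ℕ) (R C : ℝ), ∀ r, R ≤ r → log⁺ (maxModulus f r) ≤ r ^ N + C := by
  obtain ⟨ρ, hρ, R, -, hfR⟩ := h
  refine ⟨⌈ρ⌉₊, max R 1, log 2 + log⁺ (maxModulus f R), fun r hr => ?_⟩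
  have hr1 : 1 ≤ r := le_of_max_le_right hr
  have hM : maxModulus f r ≤ exp (r ^ ⌈ρ⌉₊) + maxModulus f R := by
    refine maxModulus_le (add_nonneg (exp_pos _).le (maxModulus_nonneg f R)) fun z hz => ?_
    rcases le_or_gt R ‖z‖ with hRz | hzR
    · calc ‖f z‖ ≤ exp (‖z‖ ^ ρ) := hfR z hRz
        _ ≤ exp (r ^ (⌈ρ⌉₊ : ℝ)) := by
            gcongr
            exact (rpow_le_rpow (norm_nonneg _) hz hρ.le).trans
              (rpow_le_rpow_of_exponent_le hr1 (Nat.le_ceil ρ))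
        _ ≤ exp (r ^ ⌈ρ⌉₊) + maxModulus f R := by
            rw [rpow_natCast]
            exact le_add_of_nonneg_right (maxModulus_nonneg f R)
    · exact (norm_le_maxModulus hf hzR.le).trans (le_add_of_nonneg_left (exp_pos _).le)
  calc log⁺ (maxModulus f r) ≤ log⁺ (exp (r ^ ⌈ρ⌉₊) + maxModulus f R) :=
        posLog_le_posLog (maxModulus_nonneg f r) hM
    _ ≤ log 2 + log⁺ (exp (r ^ ⌈ρ⌉₊)) + log⁺ (maxModulus f R) := posLog_add
    _ = r ^ ⌈ρ⌉₊ + (log 2 + log⁺ (maxModulus f R)) := by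
        rw [posLog_eq_log (by rw [abs_of_pos (exp_pos _)]; exact one_le_exp (by positivity)),
          log_exp]
        ring

theorem not_transcendental2_of_posLog_maxModulus_le {f : ℂ × ℂ → ℂ} (hf : Differentiable ℂ f)
    {B : ℝ} (h : ∀ r, log⁺ (maxModulus f r) ≤ B) : ¬ Transcendental2 f := by
  have hbound : ∀ z, ‖f z‖ ≤ exp B := fun z =>
    calc ‖f z‖ ≤ max 1 (maxModulus f ‖z‖) :=
          (norm_le_maxModulus hf.continuous le_rfl).trans (le_max_right _ _)
      _ = exp (log⁺ (maxModulus f ‖z‖)) := by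
          rw [posLog_eq_log_max_one (maxModulus_nonneg _ _), exp_log (by positivity)]
      _ ≤ exp B := exp_le_exp.2 (h _)
  obtain ⟨k, hk⟩ := hf.exists_const_forall_eq_of_bounded
    (isBounded_iff_forall_norm_le.2 ⟨exp B, by rintro _ ⟨z, rfl⟩; exact hbound z⟩)
  exact fun ht => ht ⟨MvPolynomial.C k, fun z => by rw [hk z, MvPolynomial.eval_C]⟩

section Recurrence

variable {v : ℝ → ℝ} {θ d b : ℝ}

theorem le_pow_mul_add_mul_geom_sum (hθ : 0 ≤ θ) (h : ∀ r, v r ≤ θ * v (r + d) + b) (k : ℕ)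
    (r : ℝ) : v r ≤ θ ^ k * v (r + k * d) + b * ∑ i ∈ Finset.range k, θ ^ i := by
  induction k generalizing r with
  | zero => simp
  | succ k ih =>
    calc v r ≤ θ * v (r + d) + b := h r
      _ ≤ θ * (θ ^ k * v (r + d + k * d) + b * ∑ i ∈ Finset.range k, θ ^ i) + b := by
          gcongr
          exact ih (r + d)
      _ = θ ^ (k + 1) * v (r + (k + 1 : ℕ) * d) + b * ∑ i ∈ Finset.range (k + 1), θ ^ i := by
          rw [geom_sum_succ]
          push_cast
          ring_nf

theorem tendsto_pow_mul_add_natCast_mul_pow (hθ₀ : 0 ≤ θ) (hθ₁ : θ < 1) (r : ℝ) (N : ℕ) :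
    Tendsto (fun k : ℕ => θ ^ k * (r + k * d) ^ N) atTop (𝓝 0) := by
  have hlim : Tendsto (fun k : ℕ => (|r| + |d|) ^ N * ((k : ℝ) ^ N * θ ^ k)) atTop (𝓝 0) := by
    simpa using (tendsto_pow_const_mul_const_pow_of_lt_one N hθ₀ hθ₁).const_mul ((|r| + |d|) ^ N)
  refine squeeze_zero_norm' ((eventually_ge_atTop 1).mono fun k hk => ?_) hlim
  have hk' : (1 : ℝ) ≤ k := by exact_mod_cast hk
  have hlin : |r + k * d| ≤ (|r| + |d|) * k :=
    calc |r + k * d| ≤ |r| + k * |d| := by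
          simpa [abs_mul, Nat.abs_cast] using abs_add_le r (k * d)
      _ ≤ (|r| + |d|) * k := by nlinarith [abs_nonneg r, abs_nonneg d]
  calc ‖θ ^ k * (r + k * d) ^ N‖ = θ ^ k * |r + k * d| ^ N := by
        rw [Real.norm_eq_abs, abs_mul, abs_pow, abs_pow, abs_of_nonneg hθ₀]
    _ ≤ θ ^ k * ((|r| + |d|) * k) ^ N := by gcongr
    _ = (|r| + |d|) ^ N * ((k : ℝ) ^ N * θ ^ k) := by rw [mul_pow]; ring

theorem le_mul_inv_one_sub_of_le_mul_add {R C : ℝ} {N : ℕ} (hθ₀ : 0 ≤ θ) (hθ₁ : θ < 1)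
    (hd : 0 < d) (h : ∀ r, v r ≤ θ * v (r + d) + b) (hgrowth : ∀ r, R ≤ r → v r ≤ r ^ N + C)
    (r : ℝ) : v r ≤ b * (1 - θ)⁻¹ := by
  have hlim : Tendsto (fun k : ℕ => θ ^ k * (r + k * d) ^ N + C * θ ^ k +
      b * ∑ i ∈ Finset.range k, θ ^ i) atTop (𝓝 (b * (1 - θ)⁻¹)) := by
    simpa using ((tendsto_pow_mul_add_natCast_mul_pow hθ₀ hθ₁ r N).add
      ((tendsto_pow_atTop_nhds_zero_of_lt_one hθ₀ hθ₁).const_mul C)).add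
      ((hasSum_geometric_of_lt_one hθ₀ hθ₁).tendsto_sum_nat.const_mul b)
  have hR : ∀ᶠ k : ℕ in atTop, R ≤ r + k * d :=
    tendsto_atTop.1 (tendsto_atTop_add_const_left _ r
      (tendsto_natCast_atTop_atTop.atTop_mul_const hd)) R
  refine ge_of_tendsto hlim (hR.mono fun k hk => ?_)
  calc v r ≤ θ ^ k * v (r + k * d) + b * ∑ i ∈ Finset.range k, θ ^ i :=
        le_pow_mul_add_mul_geom_sum hθ₀ h k r
    _ ≤ θ ^ k * ((r + k * d) ^ N + C) + b * ∑ i ∈ Finset.range k, θ ^ i := by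
        gcongr
        exact hgrowth _ hk
    _ = _ := by ring

end Recurrence

theorem le_mul_add_of_mul_le_mul_add_of_mul_le_mul_add {u v : ℝ → ℝ} {m₁ m₂ n₁ n₂ s D₁ D₂ : ℝ}
    (hm₁ : 0 < m₁) (hm₂ : 0 < m₂) (hn₁ : 0 ≤ n₁) (h₁ : ∀ r, m₁ * v r ≤ n₁ * u (r + s) + D₁)
    (h₂ : ∀ r, m₂ * u r ≤ n₂ * v (r + s) + D₂) (r : ℝ) :
    v r ≤ n₁ * n₂ / (m₁ * m₂) * v (r + 2 * s) + (m₂ * D₁ + n₁ * D₂) / (m₁ * m₂) := by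
  have h₂' := h₂ (r + s)
  rw [show r + s + s = r + 2 * s by ring] at h₂'
  rw [div_mul_eq_mul_div, ← add_div, le_div_iff₀ (by positivity)]
  nlinarith [h₁ r, mul_le_mul_of_nonneg_left h₂' hn₁]

theorem stmt_3_general (c : ℂ × ℂ) (α₁ α₂ β₁ β₂ : ℕ) (a b : ℂ)
    (m₁ m₂ n₁ n₂ : ℕ) (hm₁ : 0 < m₁) (hm₂ : 0 < m₂)
    (hmn : m₁ * m₂ > n₁ * n₂) :
    ¬ ∃ f₁ f₂ : ℂ × ℂ → ℂ,
      Entire2 f₁ ∧ Transcendental2 f₁ ∧ FiniteOrder2 f₁ ∧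
      Entire2 f₂ ∧ Transcendental2 f₂ ∧ FiniteOrder2 f₂ ∧
      (∀ z : ℂ × ℂ,
        (a * partialI α₁ α₂ f₁ z + b * partialI β₁ β₂ f₁ z) ^ n₁ + f₂ (z + c) ^ m₁ = 1) ∧
      (∀ z : ℂ × ℂ,
        (a * partialI α₁ α₂ f₂ z + b * partialI β₁ β₂ f₂ z) ^ n₂ + f₁ (z + c) ^ m₂ = 1) := by
  rintro ⟨f₁, f₂, hf₁, -, -, hf₂, htrans₂, horder₂, heq₁, heq₂⟩
  set s : ℝ := ‖c‖ + α₁ + α₂ + β₁ + β₂ + 1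
  have hsα : ‖c‖ + α₁ + α₂ ≤ s := by
    simp only [s]; linarith [β₁.cast_nonneg (α := ℝ), β₂.cast_nonneg (α := ℝ)]
  have hsβ : ‖c‖ + β₁ + β₂ ≤ s := by
    simp only [s]; linarith [α₁.cast_nonneg (α := ℝ), α₂.cast_nonneg (α := ℝ)]
  have hrec := le_mul_add_of_mul_le_mul_add_of_mul_le_mul_add
    (u := fun r => log⁺ (maxModulus f₁ r)) (v := fun r => log⁺ (maxModulus f₂ r))
    (Nat.cast_pos.2 hm₁) (Nat.cast_pos.2 hm₂) n₁.cast_nonneg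
    (mul_posLog_maxModulus_le hf₁ hf₂.continuous hsα hsβ heq₁)
    (mul_posLog_maxModulus_le hf₂ hf₁.continuous hsα hsβ heq₂)
  have hθ : (n₁ * n₂ : ℝ) / (m₁ * m₂) < 1 := by
    rw [div_lt_one (mul_pos (Nat.cast_pos.2 hm₁) (Nat.cast_pos.2 hm₂))]
    exact_mod_cast hmn
  obtain ⟨N, R, C, hgrowth⟩ := horder₂.exists_posLog_maxModulus_le hf₂.continuous
  exact not_transcendental2_of_posLog_maxModulus_le hf₂
    (le_mul_inv_one_sub_of_le_mul_add (by positivity) hθ (by positivity) hrec hgrowth) htrans₂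

theorem stmt_3 (c : ℂ × ℂ) (α₁ α₂ β₁ β₂ : ℕ) (a b : ℂ) (hab : ¬(a = 0 ∧ b = 0))
    (m₁ m₂ n₁ n₂ : ℕ) (hm₁ : 0 < m₁) (hm₂ : 0 < m₂) (hn₁ : 0 < n₁) (hn₂ : 0 < n₂)
    (hmn : m₁ * m₂ > n₁ * n₂) :
    ¬ ∃ f₁ f₂ : ℂ × ℂ → ℂ,
      Entire2 f₁ ∧ Transcendental2 f₁ ∧ FiniteOrder2 f₁ ∧
      Entire2 f₂ ∧ Transcendental2 f₂ ∧ FiniteOrder2 f₂ ∧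
      (∀ z : ℂ × ℂ,
        (a * partialI α₁ α₂ f₁ z + b * partialI β₁ β₂ f₁ z) ^ n₁ + f₂ (z + c) ^ m₁ = 1) ∧
      (∀ z : ℂ × ℂ,
        (a * partialI α₁ α₂ f₂ z + b * partialI β₁ β₂ f₂ z) ^ n₂ + f₁ (z + c) ^ m₂ = 1) :=
  stmt_3_general c α₁ α₂ β₁ β₂ a b m₁ m₂ n₁ n₂ hm₁ hm₂ hmn
end

section
/- Let c = (c₁,c₂) ∈ ℂ² and k ∈ ℂ satisfy e^{ik} = 1 and e^{i(7c₁ − 5c₂)} = −(4 + 3i)/5. Define f₁(z₁,z₂) = (1/3)·cos(7z₁ − 5z₂ + i(c₂z₁ − c₁z₂)³ + 3) and f₂(z₁,z₂) = (1/3)·cos(7z₁ − 5z₂ + i(c₂z₁ − c₁z₂)³ + 3 + k). Then for all z = (z₁,z₂) ∈ ℂ²: 9·f₁(z)² + (5·f₂(z+c) + 4·f₂(z))² = 1 and 9·f₂(z)² + (5·f₁(z+c) + 4·f₁(z))² = 1. -/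
open Complex

theorem stmt_5 (c : ℂ × ℂ) (k : ℂ)
    (hk : Complex.exp (Complex.I * k) = 1)
    (hc : Complex.exp (Complex.I * (7 * c.1 - 5 * c.2)) = -(4 + 3 * Complex.I) / 5)
    (f₁ f₂ : ℂ × ℂ → ℂ)
    (hf₁ : ∀ z : ℂ × ℂ, f₁ z = (1 / 3) *
      Complex.cos (7 * z.1 - 5 * z.2 + Complex.I * (c.2 * z.1 - c.1 * z.2) ^ 3 + 3))
    (hf₂ : ∀ z : ℂ × ℂ, f₂ z = (1 / 3) *
      Complex.cos (7 * z.1 - 5 * z.2 + Complex.I * (c.2 * z.1 - c.1 * z.2) ^ 3 + 3 + k)) :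
    ∀ z : ℂ × ℂ,
      9 * f₁ z ^ 2 + (5 * f₂ (z + c) + 4 * f₂ z) ^ 2 = 1 ∧
      9 * f₂ z ^ 2 + (5 * f₁ (z + c) + 4 * f₁ z) ^ 2 = 1 := by
  set a : ℂ := 7 * c.1 - 5 * c.2 with ha
  -- compute cos a, sin a
  have e1 : Complex.cos a + Complex.sin a * I = -(4 + 3 * I) / 5 := by
    rw [← Complex.exp_mul_I, mul_comm]; exact hc
  have e2 : Complex.cos a - Complex.sin a * I = -(4 - 3 * I) / 5 := by
    have h2 : Complex.exp (I * (-a)) = -(4 - 3 * I) / 5 := by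
      rw [mul_neg, Complex.exp_neg, hc]
      rw [inv_eq_iff_eq_inv, eq_comm, inv_eq_iff_eq_inv, inv_eq_of_mul_eq_one_left]
      linear_combination (-(9:ℂ)/25) * Complex.I_sq
    have e2' : Complex.cos (-a) + Complex.sin (-a) * I = -(4 - 3 * I) / 5 := by
      rw [← Complex.exp_mul_I, show (-a) * I = I * -a from mul_comm _ _]; exact h2
    simpa [Complex.cos_neg, Complex.sin_neg, sub_eq_add_neg, neg_mul] using e2'
  have hcos_a : Complex.cos a = -4 / 5 := by linear_combination (e1 + e2) / 2
  have hsin_a : Complex.sin a = -3 / 5 := by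
    have h := Complex.I_ne_zero
    have : Complex.sin a * I = (-3 / 5) * I := by linear_combination (e1 - e2) / 2
    exact mul_right_cancel₀ h this
  -- compute cos k, sin k
  have k1 : Complex.cos k + Complex.sin k * I = 1 := by
    rw [← Complex.exp_mul_I, mul_comm]; exact hk
  have k2 : Complex.cos k - Complex.sin k * I = 1 := by
    have h2 : Complex.exp (I * (-k)) = 1 := by
      rw [mul_neg, Complex.exp_neg, hk, inv_one]
    have k2' : Complex.cos (-k) + Complex.sin (-k) * I = 1 := by
      rw [← Complex.exp_mul_I, show (-k) * I = I * -k from mul_comm _ _]; exact h2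
    simpa [Complex.cos_neg, Complex.sin_neg, sub_eq_add_neg, neg_mul] using k2'
  have hcos_k : Complex.cos k = 1 := by linear_combination (k1 + k2) / 2
  have hsin_k : Complex.sin k = 0 := by
    have h := Complex.I_ne_zero
    have : Complex.sin k * I = 0 * I := by linear_combination (k1 - k2) / 2
    exact mul_right_cancel₀ h this
  intro z
  set w : ℂ := 7 * z.1 - 5 * z.2 + I * (c.2 * z.1 - c.1 * z.2) ^ 3 + 3 with hw
  have harg : 7 * (z + c).1 - 5 * (z + c).2 +
      I * (c.2 * (z + c).1 - c.1 * (z + c).2) ^ 3 + 3 = w + a := by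
    simp only [Prod.fst_add, Prod.snd_add, hw, ha]; ring
  have h1 := hf₁ z
  have h2 := hf₂ z
  have h3 := hf₁ (z + c)
  have h4 := hf₂ (z + c)
  rw [harg] at h3 h4
  rw [← hw] at h1 h2
  have hwa : Complex.cos (w + a) = (-4 / 5) * Complex.cos w + (3 / 5) * Complex.sin w := by
    rw [Complex.cos_add, hcos_a, hsin_a]; ring
  have hwk : Complex.cos (w + k) = Complex.cos w := by
    rw [Complex.cos_add, hcos_k, hsin_k]; ring
  have hwak : Complex.cos (w + a + k) = (-4 / 5) * Complex.cos w + (3 / 5) * Complex.sin w := by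
    rw [Complex.cos_add, hcos_k, hsin_k, hwa]; ring
  rw [hwk] at h2
  rw [hwa] at h3
  rw [hwak] at h4
  have key := Complex.cos_sq_add_sin_sq w
  constructor <;> simp only [h1, h2, h3, h4] <;> linear_combination key
end

section
/- Let c = (c₁,c₂) ∈ ℂ² and k ∈ ℂ satisfy e^{ik} = 1 and e^{i(c₁ + 2c₂)} = (√3 + i)/2. Define f₁(z₁,z₂) = cos(z₁ + 2z₂ + 3) and f₂(z₁,z₂) = cos(z₁ + 2z₂ + 3 + k). Then for all z = (z₁,z₂) ∈ ℂ²: f₁(z)² + (−2·f₂(z+c) + √3·f₂(z))² = 1 and f₂(z)² + (−2·f₁(z+c) + √3·f₁(z))² = 1. -/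
theorem stmt_6 (c : ℂ × ℂ) (k : ℂ)
    (hk : Complex.exp (Complex.I * k) = 1)
    (hc : Complex.exp (Complex.I * (c.1 + 2 * c.2)) = ((Real.sqrt 3 : ℂ) + Complex.I) / 2)
    (f₁ f₂ : ℂ × ℂ → ℂ)
    (hf₁ : ∀ z : ℂ × ℂ, f₁ z = Complex.cos (z.1 + 2 * z.2 + 3))
    (hf₂ : ∀ z : ℂ × ℂ, f₂ z = Complex.cos (z.1 + 2 * z.2 + 3 + k)) :
    ∀ z : ℂ × ℂ,
      f₁ z ^ 2 + (-2 * f₂ (z + c) + (Real.sqrt 3 : ℂ) * f₂ z) ^ 2 = 1 ∧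
      f₂ z ^ 2 + (-2 * f₁ (z + c) + (Real.sqrt 3 : ℂ) * f₁ z) ^ 2 = 1 := by
  set s : ℂ := c.1 + 2 * c.2 with hs
  have h3 : ((Real.sqrt 3 : ℝ) : ℂ) ^ 2 = 3 := by
    norm_cast
    exact Real.sq_sqrt (by norm_num)
  have hes : Complex.exp (s * Complex.I) = ((Real.sqrt 3 : ℂ) + Complex.I) / 2 := by
    rwa [mul_comm]
  have hes' : Complex.exp (-(s * Complex.I)) = ((Real.sqrt 3 : ℂ) - Complex.I) / 2 := by
    have hprod : (((Real.sqrt 3 : ℂ) + Complex.I) / 2) * (((Real.sqrt 3 : ℂ) - Complex.I) / 2) = 1 := by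
      linear_combination (1/4 : ℂ) * h3 - (1/4 : ℂ) * Complex.I_sq
    rw [Complex.exp_neg, hes, inv_eq_of_mul_eq_one_right hprod]
  -- expand exp via cos/sin
  have h1 : Complex.cos s + Complex.sin s * Complex.I = ((Real.sqrt 3 : ℂ) + Complex.I) / 2 := by
    rw [← Complex.exp_mul_I]; exact hes
  have h2 : Complex.cos s - Complex.sin s * Complex.I = ((Real.sqrt 3 : ℂ) - Complex.I) / 2 := by
    have := Complex.exp_mul_I (-s)
    rw [neg_mul] at this
    rw [hes'] at this
    rw [Complex.cos_neg, Complex.sin_neg] at this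
    linear_combination -this
  have hcos : Complex.cos s = (Real.sqrt 3 : ℂ) / 2 := by linear_combination (h1 + h2) / 2
  have hsin : Complex.sin s = 1 / 2 := by
    have h : Complex.sin s * Complex.I = Complex.I / 2 := by linear_combination (h1 - h2) / 2
    linear_combination -Complex.I * h + (Complex.sin s - 1/2) * Complex.I_sq
  -- k facts
  have hk1 : Complex.cos k + Complex.sin k * Complex.I = 1 := by
    rw [← Complex.exp_mul_I, mul_comm]; exact hk
  have hk2 : Complex.cos k - Complex.sin k * Complex.I = 1 := by
    have := Complex.exp_mul_I (-k)
    rw [neg_mul, Complex.exp_neg, mul_comm k, hk] at this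
    rw [Complex.cos_neg, Complex.sin_neg] at this
    simp at this
    linear_combination -this
  have hck : Complex.cos k = 1 := by linear_combination (hk1 + hk2) / 2
  have hsk : Complex.sin k = 0 := by
    have h : Complex.sin k * Complex.I = 0 := by linear_combination (hk1 - hk2) / 2
    linear_combination -Complex.I * h + Complex.sin k * Complex.I_sq
  have hcosk : ∀ w : ℂ, Complex.cos (w + k) = Complex.cos w := by
    intro w; rw [Complex.cos_add, hck, hsk]; ring
  intro z
  set w : ℂ := z.1 + 2 * z.2 + 3 with hw
  have hzc1 : f₁ (z + c) = Complex.cos (w + s) := by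
    rw [hf₁]; simp [Prod.fst_add, Prod.snd_add, hw, hs]; ring_nf
  have hzc2 : f₂ (z + c) = Complex.cos (w + s) := by
    rw [hf₂]
    have : (z + c).1 + 2 * (z + c).2 + 3 + k = (w + s) + k := by
      simp [Prod.fst_add, Prod.snd_add, hw, hs]; ring
    rw [this, hcosk]
  have hz1 : f₁ z = Complex.cos w := by rw [hf₁]
  have hz2 : f₂ z = Complex.cos w := by rw [hf₂, hcosk]
  have hkey : -2 * Complex.cos (w + s) + (Real.sqrt 3 : ℂ) * Complex.cos w = Complex.sin w := by
    rw [Complex.cos_add, hcos, hsin]; ring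
  constructor
  · rw [hz1, hzc2, hz2, hkey, Complex.cos_sq_add_sin_sq]
  · rw [hz2, hzc1, hz1, hkey, Complex.cos_sq_add_sin_sq]
end

section
/- Let c = (c₁,c₂) ∈ ℂ² and k ∈ ℂ satisfy e^{ik} = −1 and e^{i(5c₁ − 2c₂)} = (√3 − i)/2. Define f₁(z₁,z₂) = cos(5z₁ − 2z₂ + 10i) and f₂(z₁,z₂) = cos(5z₁ − 2z₂ + 10i + k). Then for all z = (z₁,z₂) ∈ ℂ²: f₁(z)² + (−2·f₂(z+c) + √3·f₂(z))² = 1 and f₂(z)² + (−2·f₁(z+c) + √3·f₁(z))² = 1. -/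
theorem stmt_7 (c : ℂ × ℂ) (k : ℂ)
    (hk : Complex.exp (Complex.I * k) = -1)
    (hc : Complex.exp (Complex.I * (5 * c.1 - 2 * c.2)) = ((Real.sqrt 3 : ℂ) - Complex.I) / 2)
    (f₁ f₂ : ℂ × ℂ → ℂ)
    (hf₁ : ∀ z : ℂ × ℂ, f₁ z = Complex.cos (5 * z.1 - 2 * z.2 + 10 * Complex.I))
    (hf₂ : ∀ z : ℂ × ℂ, f₂ z = Complex.cos (5 * z.1 - 2 * z.2 + 10 * Complex.I + k)) :
    ∀ z : ℂ × ℂ,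
      f₁ z ^ 2 + (-2 * f₂ (z + c) + (Real.sqrt 3 : ℂ) * f₂ z) ^ 2 = 1 ∧
      f₂ z ^ 2 + (-2 * f₁ (z + c) + (Real.sqrt 3 : ℂ) * f₁ z) ^ 2 = 1 := by
  have h3 : (Real.sqrt 3 : ℂ) * (Real.sqrt 3 : ℂ) = 3 := by
    norm_cast
    exact Real.mul_self_sqrt (by norm_num)
  set d : ℂ := 5 * c.1 - 2 * c.2 with hd
  have ekn : Complex.exp (-(Complex.I * k)) = -1 := by
    rw [Complex.exp_neg, hk]; norm_num
  have edn : Complex.exp (-(Complex.I * d)) = ((Real.sqrt 3 : ℂ) + Complex.I) / 2 := by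
    rw [Complex.exp_neg, hc]
    refine inv_eq_of_mul_eq_one_left ?_
    linear_combination (1/4) * h3 - (1/4) * Complex.I_mul_I
  have coseq : ∀ a : ℂ, Complex.cos a
      = (Complex.exp (Complex.I * a) + Complex.exp (-(Complex.I * a))) / 2 := fun a => by
    simp only [Complex.cos]
    rw [show a * Complex.I = Complex.I * a by ring, show -a * Complex.I = -(Complex.I * a) by ring]
  have sineq : ∀ a : ℂ, Complex.sin a
      = (Complex.exp (-(Complex.I * a)) - Complex.exp (Complex.I * a)) * Complex.I / 2 := fun a => by
    simp only [Complex.sin]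
    rw [show a * Complex.I = Complex.I * a by ring, show -a * Complex.I = -(Complex.I * a) by ring]
  have hcosk : Complex.cos k = -1 := by rw [coseq, hk, ekn]; norm_num
  have hsink : Complex.sin k = 0 := by rw [sineq, hk, ekn]; ring
  have hcosd : Complex.cos d = (Real.sqrt 3 : ℂ) / 2 := by rw [coseq, hc, edn]; ring
  have hsind : Complex.sin d = -(1 / 2) := by
    rw [sineq, hc, edn]
    linear_combination (1/2) * Complex.I_mul_I
  intro z
  set w : ℂ := 5 * z.1 - 2 * z.2 + 10 * Complex.I with hw
  have harg : 5 * (z + c).1 - 2 * (z + c).2 + 10 * Complex.I = w + d := by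
    simp only [Prod.fst_add, Prod.snd_add, hw, hd]; ring
  have e1 : f₁ z = Complex.cos w := hf₁ z
  have e2 : f₂ z = -Complex.cos w := by
    rw [hf₂ z, Complex.cos_add, hcosk, hsink]; ring
  have e3 : f₁ (z + c) = Complex.cos w * ((Real.sqrt 3 : ℂ) / 2) + Complex.sin w * (1 / 2) := by
    rw [hf₁ (z + c), harg, Complex.cos_add, hcosd, hsind]; ring
  have e4 : f₂ (z + c) = -(Complex.cos w * ((Real.sqrt 3 : ℂ) / 2) + Complex.sin w * (1 / 2)) := by
    rw [hf₂ (z + c), show 5 * (z + c).1 - 2 * (z + c).2 + 10 * Complex.I + k = w + d + k by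
      rw [harg], Complex.cos_add (w + d), hcosk, hsink, Complex.cos_add, hcosd, hsind]; ring
  have hpyth := Complex.sin_sq_add_cos_sq w
  constructor
  · rw [e1, e2, e4]; linear_combination hpyth
  · rw [e1, e2, e3]; linear_combination hpyth
end

section
/- Let c = (c₁,c₂) ∈ ℂ² and k ∈ ℂ satisfy e^{ik} = i and e^{i(c₁ + i c₂)} = 1. Define f₁(z₁,z₂) = (1/12)·cos(−(z₁ + i z₂ + 17i) + k) and f₂(z₁,z₂) = (1/12)·cos(z₁ + i z₂ + 17i). Then for all z = (z₁,z₂) ∈ ℂ²: 144·f₁(z)² + (7·f₂(z+c) + 5·f₂(z))² = 1 and 144·f₂(z)² + (7·f₁(z+c) + 5·f₁(z))² = 1. -/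
theorem stmt_8 (c : ℂ × ℂ) (k : ℂ)
    (hk : Complex.exp (Complex.I * k) = Complex.I)
    (hc : Complex.exp (Complex.I * (c.1 + Complex.I * c.2)) = 1)
    (f₁ f₂ : ℂ × ℂ → ℂ)
    (hf₁ : ∀ z : ℂ × ℂ, f₁ z = (1 / 12) *
      Complex.cos (-(z.1 + Complex.I * z.2 + 17 * Complex.I) + k))
    (hf₂ : ∀ z : ℂ × ℂ, f₂ z = (1 / 12) *
      Complex.cos (z.1 + Complex.I * z.2 + 17 * Complex.I)) :
    ∀ z : ℂ × ℂ,
      144 * f₁ z ^ 2 + (7 * f₂ (z + c) + 5 * f₂ z) ^ 2 = 1 ∧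
      144 * f₂ z ^ 2 + (7 * f₁ (z + c) + 5 * f₁ z) ^ 2 = 1 := by
  intro z
  set γ : ℂ := c.1 + Complex.I * c.2 with hγ
  have hIne : Complex.I ≠ 0 := Complex.I_ne_zero
  have hexpnegγ : Complex.exp (-γ * Complex.I) = 1 := by
    rw [neg_mul, Complex.exp_neg, mul_comm, hc]; simp
  have hexpγ : Complex.exp (γ * Complex.I) = 1 := by rw [mul_comm]; exact hc
  have hexpk : Complex.exp (k * Complex.I) = Complex.I := by rw [mul_comm]; exact hk
  have hexpnegk : Complex.exp (-k * Complex.I) = -Complex.I := by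
    rw [neg_mul, Complex.exp_neg, hexpk, Complex.inv_I]
  have hcosγ : Complex.cos γ = 1 := by
    rw [Complex.cos, hexpγ, hexpnegγ]; norm_num
  have hsinγ : Complex.sin γ = 0 := by
    rw [Complex.sin, hexpγ, hexpnegγ]; ring
  have hcosk : Complex.cos k = 0 := by
    rw [Complex.cos, hexpk, hexpnegk]; ring
  have hsink : Complex.sin k = 1 := by
    rw [Complex.sin, hexpk, hexpnegk]
    linear_combination -Complex.I_sq
  set w : ℂ := z.1 + Complex.I * z.2 + 17 * Complex.I with hw
  have h1 : f₁ z = (1/12) * Complex.sin w := by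
    rw [hf₁ z]
    have : -(z.1 + Complex.I * z.2 + 17 * Complex.I) + k = k - w := by rw [hw]; ring
    rw [this, Complex.cos_sub, hcosk, hsink]
    ring
  have h2 : f₂ z = (1/12) * Complex.cos w := by rw [hf₂ z, hw]
  have h2c : f₂ (z + c) = (1/12) * Complex.cos w := by
    rw [hf₂ (z + c)]
    have : (z + c).1 + Complex.I * (z + c).2 + 17 * Complex.I = w + γ := by
      simp [Prod.fst_add, Prod.snd_add, hw, hγ]; ring
    rw [this, Complex.cos_add, hcosγ, hsinγ]; ring
  have h1c : f₁ (z + c) = (1/12) * Complex.sin w := by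
    rw [hf₁ (z + c)]
    have : -((z + c).1 + Complex.I * (z + c).2 + 17 * Complex.I) + k = (k - w) - γ := by
      simp [Prod.fst_add, Prod.snd_add, hw, hγ]; ring
    rw [this, Complex.cos_sub, hcosγ, hsinγ, Complex.cos_sub, hcosk, hsink]
    ring
  have hpyth := Complex.sin_sq_add_cos_sq w
  constructor <;> · simp only [h1, h2, h2c, h1c]; linear_combination hpyth
end

section
/- Let n be a positive integer, m an integer, and c = (c₁,c₂) ∈ ℂ² with c₁ + 2c₂ = (2m + 1/2)πi. Define g(z₁,z₂) = z₁ + 2z₂ + (c₂z₁ − c₁z₂)ⁿ + 3, f₁(z) = (1/4)·((1+i)e^{g(z)} + (1−i)e^{−g(z)}) and f₂(z) = (1/4)·((1+i)e^{g(z)} − (i−1)e^{−g(z)}). Then for all z ∈ ℂ²: (f₁(z+c) + f₁(z))² + (f₂(z+c) − f₂(z))² = 1 and (f₂(z+c) + f₂(z))² + (f₁(z+c) − f₁(z))² = 1. -/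
theorem stmt_9 (n : ℕ) (hn : 0 < n) (m : ℤ) (c : ℂ × ℂ)
    (hc : c.1 + 2 * c.2 = (2 * (m : ℂ) + 1 / 2) * (Real.pi : ℂ) * Complex.I)
    (g : ℂ × ℂ → ℂ)
    (hg : ∀ z : ℂ × ℂ, g z = z.1 + 2 * z.2 + (c.2 * z.1 - c.1 * z.2) ^ n + 3)
    (f₁ f₂ : ℂ × ℂ → ℂ)
    (hf₁ : ∀ z : ℂ × ℂ, f₁ z = (1 / 4) *
      ((1 + Complex.I) * Complex.exp (g z) + (1 - Complex.I) * Complex.exp (-(g z))))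
    (hf₂ : ∀ z : ℂ × ℂ, f₂ z = (1 / 4) *
      ((1 + Complex.I) * Complex.exp (g z) - (Complex.I - 1) * Complex.exp (-(g z)))) :
    ∀ z : ℂ × ℂ,
      (f₁ (z + c) + f₁ z) ^ 2 + (f₂ (z + c) - f₂ z) ^ 2 = 1 ∧
      (f₂ (z + c) + f₂ z) ^ 2 + (f₁ (z + c) - f₁ z) ^ 2 = 1 := by
  have hθ : Complex.exp (c.1 + 2 * c.2) = Complex.I := by
    rw [hc]
    have : (2 * (m : ℂ) + 1 / 2) * (Real.pi : ℂ) * Complex.I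
        = (m : ℂ) * (2 * (Real.pi : ℂ) * Complex.I) + (Real.pi : ℂ) / 2 * Complex.I := by
      ring
    rw [this, Complex.exp_add, Complex.exp_int_mul_two_pi_mul_I,
      Complex.exp_mul_I, one_mul]
    have : ((Real.pi : ℂ) / 2) = ((Real.pi / 2 : ℝ) : ℂ) := by push_cast; ring
    rw [this, ← Complex.ofReal_cos, ← Complex.ofReal_sin,
      Real.cos_pi_div_two, Real.sin_pi_div_two]
    simp
  have hgc : ∀ z : ℂ × ℂ, g (z + c) = g z + (c.1 + 2 * c.2) := by
    intro z
    rw [hg, hg]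
    have h1 : (z + c).1 = z.1 + c.1 := rfl
    have h2 : (z + c).2 = z.2 + c.2 := rfl
    rw [h1, h2]
    have : c.2 * (z.1 + c.1) - c.1 * (z.2 + c.2) = c.2 * z.1 - c.1 * z.2 := by ring
    rw [this]; ring
  intro z
  have e1 : Complex.exp (g (z + c)) = Complex.I * Complex.exp (g z) := by
    rw [hgc, Complex.exp_add, hθ]; ring
  have e2 : Complex.exp (-g (z + c)) = -Complex.I * Complex.exp (-g z) := by
    rw [hgc, neg_add, Complex.exp_add, Complex.exp_neg (c.1 + 2 * c.2), hθ, Complex.inv_I]; ring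
  have hne : Complex.exp (g z) ≠ 0 := Complex.exp_ne_zero _
  have hinv : Complex.exp (-g z) = (Complex.exp (g z))⁻¹ := Complex.exp_neg _
  constructor <;>
  · rw [hf₁, hf₁, hf₂, hf₂, e1, e2, hinv]
    have h2 : Complex.I ^ 2 = -1 := Complex.I_sq
    have h3 : Complex.I ^ 3 = -Complex.I := by
      rw [pow_succ, h2]; ring
    have h4 : Complex.I ^ 4 = 1 := by rw [pow_succ, h3]; simp [Complex.I_mul_I]
    field_simp
    ring_nf
    rw [h2, h3, h4]
    ring
end

section
/- Let m be an integer and c = (c₁,c₂) ∈ ℂ² with c₁ − c₂ = (2m − 1/2)π. Define w(z₁,z₂) = z₁ − z₂ + (c₂z₁ − c₁z₂)⁵ − 3i, f₁(z) = (cos(w(z)) + sin(w(z)))/2 and f₂(z) = −(cos(w(z)) + sin(w(z)))/2. Then for all z ∈ ℂ²: (f₁(z+c) + f₁(z))² + (f₂(z+c) − f₂(z))² = 1 and (f₂(z+c) + f₂(z))² + (f₁(z+c) − f₁(z))² = 1. -/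
theorem stmt_10 (m : ℤ) (c : ℂ × ℂ)
    (hc : c.1 - c.2 = (2 * (m : ℂ) - 1 / 2) * (Real.pi : ℂ))
    (w : ℂ × ℂ → ℂ)
    (hw : ∀ z : ℂ × ℂ, w z = z.1 - z.2 + (c.2 * z.1 - c.1 * z.2) ^ 5 - 3 * Complex.I)
    (f₁ f₂ : ℂ × ℂ → ℂ)
    (hf₁ : ∀ z : ℂ × ℂ, f₁ z = (Complex.cos (w z) + Complex.sin (w z)) / 2)
    (hf₂ : ∀ z : ℂ × ℂ, f₂ z = -((Complex.cos (w z) + Complex.sin (w z)) / 2)) :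
    ∀ z : ℂ × ℂ,
      (f₁ (z + c) + f₁ z) ^ 2 + (f₂ (z + c) - f₂ z) ^ 2 = 1 ∧
      (f₂ (z + c) + f₂ z) ^ 2 + (f₁ (z + c) - f₁ z) ^ 2 = 1 := by
  intro z
  have hshift : w (z + c) = w z + (2 * (m : ℂ) - 1 / 2) * (Real.pi : ℂ) := by
    have h1 : (z + c).1 = z.1 + c.1 := rfl
    have h2 : (z + c).2 = z.2 + c.2 := rfl
    rw [hw, hw, h1, h2, ← hc]
    ring
  have hθ : (2 * (m : ℂ) - 1 / 2) * (Real.pi : ℂ)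
      = -((Real.pi : ℂ) / 2) + m * (2 * Real.pi) := by ring
  have hcosθ : Complex.cos ((2 * (m : ℂ) - 1 / 2) * (Real.pi : ℂ)) = 0 := by
    rw [hθ, Complex.cos_add_int_mul_two_pi, Complex.cos_neg, Complex.cos_pi_div_two]
  have hsinθ : Complex.sin ((2 * (m : ℂ) - 1 / 2) * (Real.pi : ℂ)) = -1 := by
    rw [hθ, Complex.sin_add_int_mul_two_pi, Complex.sin_neg, Complex.sin_pi_div_two]
  have hcos : Complex.cos (w (z + c)) = Complex.sin (w z) := by
    rw [hshift, Complex.cos_add, hcosθ, hsinθ]; ring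
  have hsin : Complex.sin (w (z + c)) = -Complex.cos (w z) := by
    rw [hshift, Complex.sin_add, hcosθ, hsinθ]; ring
  have key := Complex.sin_sq_add_cos_sq (w z)
  constructor <;>
  · rw [hf₁, hf₁, hf₂, hf₂, hcos, hsin]
    linear_combination key
end

section
/- Let P, Q : ℂ² → ℂ be polynomial functions and let C be a nonzero complex number. If exp(P(z)) + exp(Q(z)) = C for all z ∈ ℂ², then both P and Q are constant. -/
/-- A function ℂ² → ℂ is a polynomial function if it is given by evaluating a polynomial
in two complex variables. -/
def IsPolyFun2 (f : ℂ × ℂ → ℂ) : Prop :=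
  ∃ p : MvPolynomial (Fin 2) ℂ, ∀ z : ℂ × ℂ, f z = MvPolynomial.eval ![z.1, z.2] p

/-- One-variable core: if exp∘p + exp∘q ≡ C ≠ 0 then both evals are constant. -/
lemma one_var_core (p q : Polynomial ℂ) (C : ℂ) (hC : C ≠ 0)
    (h : ∀ t : ℂ, Complex.exp (p.eval t) + Complex.exp (q.eval t) = C) :
    (∀ t s : ℂ, p.eval t = p.eval s) ∧ (∀ t s : ℂ, q.eval t = q.eval s) := by
  obtain ⟨w, hw⟩ : ∃ w, Complex.exp w = C := by
    have : C ∈ Set.range Complex.exp := by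
      rw [Complex.range_exp]; exact hC
    exact this
  have key : ∀ f : Polynomial ℂ, (∀ t, Complex.exp (f.eval t) ≠ C) →
      ∀ t s, f.eval t = f.eval s := by
    intro f hf t s
    by_contra hne
    have hdeg : 0 < f.degree := by
      by_contra hd
      push_neg at hd
      have := Polynomial.degree_le_zero_iff.mp hd
      rw [this] at hne
      simp at hne
    have h2 : 0 < (f - Polynomial.C w).degree := by
      rwa [Polynomial.degree_sub_C hdeg]
    obtain ⟨t0, ht0⟩ := Complex.exists_root h2
    have ht0' : f.eval t0 = w := by
      have := ht0
      simp [Polynomial.IsRoot, sub_eq_zero] at this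
      exact this
    exact hf t0 (by rw [ht0', hw])
  constructor
  · apply key
    intro t hpt
    have hh := h t
    rw [hpt] at hh
    exact Complex.exp_ne_zero (q.eval t) (by linear_combination hh)
  · apply key
    intro t hqt
    have hh := h t
    rw [hqt] at hh
    exact Complex.exp_ne_zero (p.eval t) (by linear_combination hh)

/-- Slicing: fixing the second coordinate gives a one-variable polynomial. -/
lemma slice_fst (p : MvPolynomial (Fin 2) ℂ) (y : ℂ) :
    ∃ f : Polynomial ℂ, ∀ x : ℂ, MvPolynomial.eval ![x, y] p = f.eval x := by
  refine ⟨MvPolynomial.aeval ![Polynomial.X, Polynomial.C y] p, fun x => ?_⟩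
  induction p using MvPolynomial.induction_on with
  | C a => simp
  | add p q hp hq => simp [hp, hq]
  | mul_X p i hp =>
    fin_cases i <;> simp [hp]

lemma slice_snd (p : MvPolynomial (Fin 2) ℂ) (x : ℂ) :
    ∃ f : Polynomial ℂ, ∀ y : ℂ, MvPolynomial.eval ![x, y] p = f.eval y := by
  refine ⟨MvPolynomial.aeval ![Polynomial.C x, Polynomial.X] p, fun y => ?_⟩
  induction p using MvPolynomial.induction_on with
  | C a => simp
  | add p q hp hq => simp [hp, hq]
  | mul_X p i hp =>
    fin_cases i <;> simp [hp]

theorem stmt_12 (P Q : ℂ × ℂ → ℂ) (hP : IsPolyFun2 P) (hQ : IsPolyFun2 Q)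
    (C : ℂ) (hC : C ≠ 0)
    (h : ∀ z : ℂ × ℂ, Complex.exp (P z) + Complex.exp (Q z) = C) :
    (∃ a : ℂ, ∀ z : ℂ × ℂ, P z = a) ∧ (∃ b : ℂ, ∀ z : ℂ × ℂ, Q z = b) := by
  obtain ⟨p, hp⟩ := hP
  obtain ⟨q, hq⟩ := hQ
  -- constancy in first variable, any fixed y
  have fst : ∀ y x : ℂ, P (x, y) = P (0, y) ∧ Q (x, y) = Q (0, y) := by
    intro y x
    obtain ⟨f, hf⟩ := slice_fst p y
    obtain ⟨g, hg⟩ := slice_fst q y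
    have hcore := one_var_core f g C hC (fun t => by
      have := h (t, y)
      rw [hp (t, y), hq (t, y)] at this
      simpa [hf t, hg t] using this)
    constructor
    · rw [hp (x, y), hp (0, y)]
      simp only [Prod.fst, Prod.snd] at *
      rw [hf x, hf 0]  -- need eval form
      exact hcore.1 x 0
    · rw [hq (x, y), hq (0, y), hg x, hg 0]
      exact hcore.2 x 0
  have snd : ∀ y : ℂ, P (0, y) = P (0, 0) ∧ Q (0, y) = Q (0, 0) := by
    intro y
    obtain ⟨f, hf⟩ := slice_snd p 0
    obtain ⟨g, hg⟩ := slice_snd q 0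
    have hcore := one_var_core f g C hC (fun t => by
      have := h (0, t)
      rw [hp (0, t), hq (0, t)] at this
      simpa [hf t, hg t] using this)
    constructor
    · rw [hp (0, y), hp (0, 0), hf y, hf 0]
      exact hcore.1 y 0
    · rw [hq (0, y), hq (0, 0), hg y, hg 0]
      exact hcore.2 y 0
  constructor
  · exact ⟨P (0, 0), fun z => by rw [show z = (z.1, z.2) from rfl, (fst z.2 z.1).1, (snd z.2).1]⟩
  · exact ⟨Q (0, 0), fun z => by rw [show z = (z.1, z.2) from rfl, (fst z.2 z.1).2, (snd z.2).2]⟩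
end
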